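/- Average of a single inverse characteristic polynomial: ⟨∏_{i=1}^{N}(ε − xᵢ)^{−1}⟩ with respect to Δ(x)²dα(x)/Z_N equals γ_{N−1} h_{N−1}(ε), where γ_{N−1} = −2πi/c_{N−1}² and h_{N−1}(ε) = (1/2πi)∫ π_{N−1}(t)/(t−ε) dα(t). -/

import Mathlib

open MeasureTheory Polynomial Finset

/-- The Vandermonde product `∏_{i>j} (x i - x j)`. -/
noncomputable def Vand {n : ℕ} (x : Fin n → ℝ) : ℝ :=
  ∏ i : Fin n, ∏ j ∈ Finset.Iio i, (x i - x j)

/-!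
Both integrals are computed with Andréief's identity
`∫ det[f_j(x_i)] det[g_j(x_i)] dα^N = N! det[∫ f_j g_k dα]`, taking `f_j = π_j`, for which
`det[π_j(x_i)] = Δ(x)`. For `Z_N` take `g = f`: the Gram matrix is diagonal and `Z_N = N! ∏ c_j²`.
For the numerator, multiplying row `i` of `[(x_i - ε)⁻¹, 1, x_i, …, x_i^{N-2}]` by `x_i - ε`
produces the monic family `1, (x - ε), (x - ε)x, …`, so its determinant is
`Δ(x) / ∏ (x_i - ε)`. Against `π_0, …, π_{N-1}` the resulting Gram matrix has last row
`(∫ π_{N-1}/(t - ε) dα, 0, …, 0)`, and deleting that row and the first column leaves an upper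
triangular matrix with diagonal `c_0², …, c_{N-2}²`.
-/

open scoped Nat
open Equiv (Perm)

namespace Matrix

variable {ι R : Type*} [Fintype ι] [DecidableEq ι] [CommRing R]

theorem det_of_apply_eq_sum_perm (f : ι → ι → R) :
    (of fun i j => f j i).det = ∑ σ : Perm ι, Perm.sign σ • ∏ i, f (σ i) i := by
  rw [← det_transpose, det_apply]
  rfl

theorem sum_perm_sign_mul_sign_smul_prod (B : Matrix ι ι R) :
    ∑ σ : Perm ι, ∑ τ : Perm ι, (Perm.sign σ * Perm.sign τ) • ∏ i, B (σ i) (τ i) =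
      (Fintype.card ι)! • B.det := by
  have row_sum (σ : Perm ι) :
      ∑ τ : Perm ι, (Perm.sign σ * Perm.sign τ) • ∏ i, B (σ i) (τ i) = B.det := by
    have h : ∑ τ : Perm ι, Perm.sign τ • ∏ i, B (σ i) (τ i) = Perm.sign σ * B.det := by
      rw [← det_permute, ← det_transpose, det_apply]
      rfl
    simp_rw [mul_smul, ← smul_sum, h, Units.smul_def, zsmul_eq_mul, ← mul_assoc, ← Int.cast_mul,
      ← Units.val_mul, Int.units_mul_self, Units.val_one, Int.cast_one, one_mul]
  simp_rw [row_sum, sum_const, card_univ, Fintype.card_perm]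

end Matrix

section Andreief

variable {X ι : Type*} [MeasurableSpace X] [Fintype ι] [DecidableEq ι]

theorem integral_det_mul_det (μ : Measure X) [SigmaFinite μ] (f g : ι → X → ℝ)
    (hfg : ∀ j k, Integrable (fun t => f j t * g k t) μ) :
    ∫ x : ι → X, (Matrix.of fun i j => f j (x i)).det * (Matrix.of fun i j => g j (x i)).det
        ∂(Measure.pi fun _ => μ)
      = ((Fintype.card ι)! : ℝ) * (Matrix.of fun j k => ∫ t, f j t * g k t ∂μ).det := by
  have expand (x : ι → X) :
      (Matrix.of fun i j => f j (x i)).det * (Matrix.of fun i j => g j (x i)).det =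
        ∑ σ : Perm ι, ∑ τ : Perm ι, ((Perm.sign σ * Perm.sign τ : ℤˣ) : ℤ) •
          ∏ i, f (σ i) (x i) * g (τ i) (x i) := by
    rw [Matrix.det_of_apply_eq_sum_perm (fun j i => f j (x i)),
      Matrix.det_of_apply_eq_sum_perm (fun j i => g j (x i)), sum_mul_sum]
    simp_rw [prod_mul_distrib, Units.smul_def, Units.val_mul, smul_mul_smul_comm]
  have hint (σ τ : Perm ι) :
      Integrable (fun x : ι → X => ∏ i, f (σ i) (x i) * g (τ i) (x i)) (Measure.pi fun _ => μ) :=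
    Integrable.fintype_prod (f := fun i t => f (σ i) t * g (τ i) t) fun i => hfg (σ i) (τ i)
  have hint_smul (σ τ : Perm ι) (u : ℤ) :
      Integrable (fun x : ι → X => u • ∏ i, f (σ i) (x i) * g (τ i) (x i))
        (Measure.pi fun _ => μ) := (hint σ τ).smul u
  have hprod (σ τ : Perm ι) :
      ∫ x : ι → X, ∏ i, f (σ i) (x i) * g (τ i) (x i) ∂(Measure.pi fun _ => μ) =
        ∏ i, ∫ t, f (σ i) t * g (τ i) t ∂μ :=
    integral_fintype_prod_eq_prod fun i t => f (σ i) t * g (τ i) t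
  have inner (σ : Perm ι) :
      ∫ x : ι → X, ∑ τ : Perm ι, ((Perm.sign σ * Perm.sign τ : ℤˣ) : ℤ) •
          ∏ i, f (σ i) (x i) * g (τ i) (x i) ∂(Measure.pi fun _ => μ) =
        ∑ τ : Perm ι, ((Perm.sign σ * Perm.sign τ : ℤˣ) : ℤ) •
          ∏ i, ∫ t, f (σ i) t * g (τ i) t ∂μ := by
    rw [integral_finsetSum _ fun τ _ => hint_smul σ τ _]
    exact sum_congr rfl fun τ _ => by rw [(hint σ τ).integral_smul, hprod]
  simp_rw [expand]
  rw [integral_finsetSum _ fun σ _ => integrable_finsetSum _ fun τ _ => hint_smul σ τ _]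
  simp_rw [inner]
  rw [← nsmul_eq_mul, ← Matrix.sum_perm_sign_mul_sign_smul_prod]
  rfl

end Andreief

theorem ContinuousOn.integrable_of_measure_compl_eq_zero {X E : Type*} [TopologicalSpace X]
    [T2Space X] [MeasurableSpace X] [OpensMeasurableSpace X] [NormedAddCommGroup E]
    {μ : Measure X} [IsFiniteMeasureOnCompacts μ] {K : Set X} {f : X → E} (hK : IsCompact K)
    (hμK : μ Kᶜ = 0) (hf : ContinuousOn f K) : Integrable f μ := by
  rw [← Measure.restrict_eq_self_of_ae_mem (mem_ae_iff.2 hμK)]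
  exact hf.integrableOn_compact hK

structure IsMonicOrthogonalSequence (α : Measure ℝ) (π : ℕ → ℝ[X]) : Prop where
  monic : ∀ j, (π j).Monic
  natDegree_eq : ∀ j, (π j).natDegree = j
  orthogonal : ∀ j k, j ≠ k → ∫ t, (π j).eval t * (π k).eval t ∂α = 0

namespace IsMonicOrthogonalSequence

variable {α : Measure ℝ} {π : ℕ → ℝ[X]}

theorem integral_eval_mul_eval_eq_zero_of_degree_lt (hπ : IsMonicOrthogonalSequence α π)
    (hα : ∀ p : ℝ[X], Integrable (fun t => p.eval t) α) {m : ℕ} {p : ℝ[X]}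
    (hp : p.degree < m) : ∫ t, (π m).eval t * p.eval t ∂α = 0 := by
  let S : Sequence ℝ :=
    ⟨π, fun j => by rw [degree_eq_natDegree (hπ.monic j).ne_zero, hπ.natDegree_eq]⟩
  have hspan : p ∈ Submodule.span ℝ (π '' Set.Iio m) := by
    rw [S.span_degreeLT fun j _ => by simp [S, (hπ.monic j).leadingCoeff]]
    exact mem_degreeLT.2 hp
  have hint (q : ℝ[X]) : Integrable (fun t => (π m).eval t * q.eval t) α := by
    simpa using hα (π m * q)
  clear hp
  induction hspan using Submodule.span_induction with
  | mem q hq =>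
    obtain ⟨j, hj, rfl⟩ := hq
    exact hπ.orthogonal m j (ne_of_gt hj)
  | zero => simp
  | add q r _ _ hq hr =>
    simp_rw [eval_add, mul_add]
    rw [integral_add (hint q) (hint r), hq, hr, add_zero]
  | smul a q _ hq =>
    simp_rw [eval_smul, smul_eq_mul, mul_left_comm]
    rw [integral_const_mul, hq, mul_zero]

theorem integral_eval_mul_pow_self (hπ : IsMonicOrthogonalSequence α π)
    (hα : ∀ p : ℝ[X], Integrable (fun t => p.eval t) α) (m : ℕ) :
    ∫ t, (π m).eval t * t ^ m ∂α = ∫ t, (π m).eval t ^ 2 ∂α := by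
  have hlow : ((X : ℝ[X]) ^ m - π m).degree < m := by
    rw [← degree_X_pow (R := ℝ) m]
    refine degree_sub_lt_left ?_ (pow_ne_zero _ X_ne_zero) ?_
    · rw [degree_X_pow, degree_eq_natDegree (hπ.monic m).ne_zero, hπ.natDegree_eq]
    · rw [(monic_X_pow m).leadingCoeff, (hπ.monic m).leadingCoeff]
  have h := hπ.integral_eval_mul_eval_eq_zero_of_degree_lt hα hlow
  have hpow : Integrable (fun t => (π m).eval t * t ^ m) α := by
    have := hα (π m * X ^ m)
    simp only [eval_mul, eval_pow, eval_X] at this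
    exact this
  have hsq : Integrable (fun t => (π m).eval t * (π m).eval t) α := by simpa using hα (π m * π m)
  simp only [eval_sub, eval_pow, eval_X, mul_sub] at h
  rw [integral_sub hpow hsq, sub_eq_zero] at h
  simpa only [sq] using h

theorem integral_eval_mul_pow_eq_zero (hπ : IsMonicOrthogonalSequence α π)
    (hα : ∀ p : ℝ[X], Integrable (fun t => p.eval t) α) {k m : ℕ} (hkm : k < m) :
    ∫ t, (π m).eval t * t ^ k ∂α = 0 := by
  have h := hπ.integral_eval_mul_eval_eq_zero_of_degree_lt hα (p := X ^ k)
    (by rw [degree_X_pow]; exact_mod_cast hkm)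
  simp only [eval_pow, eval_X] at h
  exact h

end IsMonicOrthogonalSequence

theorem Vand_eq_det_vandermonde {n : ℕ} (x : Fin n → ℝ) : Vand x = (Matrix.vandermonde x).det := by
  rw [Matrix.det_vandermonde, Vand,
    prod_comm' (t' := univ) (s' := fun j => Ioi j) (by simp)]

theorem Vand_eq_det_eval {n : ℕ} {p : Fin n → ℝ[X]} (hdeg : ∀ i, (p i).natDegree = i)
    (hmonic : ∀ i, (p i).Monic) (x : Fin n → ℝ) :
    Vand x = (Matrix.of fun i j => (p j).eval (x i)).det := by
  rw [Vand_eq_det_vandermonde,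
    Matrix.det_eval_matrixOfPolynomials_eq_det_vandermonde x p hdeg hmonic]

noncomputable def resolventMonomial (ε : ℝ) {n : ℕ} : Fin (n + 1) → ℝ → ℝ :=
  Fin.cons (fun t => (t - ε)⁻¹) fun k t => t ^ (k : ℕ)

theorem prod_sub_mul_det_resolventMonomial {n : ℕ} (ε : ℝ) (x : Fin (n + 1) → ℝ)
    (hx : ∀ i, x i ≠ ε) :
    (∏ i, (x i - ε)) * (Matrix.of fun i k => resolventMonomial ε k (x i)).det = Vand x := by
  let p : Fin (n + 1) → ℝ[X] := Fin.cons 1 fun k => (X - C ε) * X ^ (k : ℕ)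
  have hdeg : ∀ k, (p k).natDegree = k := Fin.cases (by simp [p]) fun k => by
    simp [p, natDegree_mul (X_sub_C_ne_zero ε) (pow_ne_zero _ X_ne_zero), add_comm]
  have hmonic : ∀ k, (p k).Monic := Fin.cases (by simp [p]) fun k => by
    simpa [p] using (monic_X_sub_C ε).mul (monic_X_pow (k : ℕ))
  rw [Vand_eq_det_eval hdeg hmonic, ← Matrix.det_mul_column]
  congr 1
  ext i k
  refine Fin.cases ?_ (fun k => ?_) k
  · simp [p, resolventMonomial, sub_ne_zero.2 (hx i)]
  · simp [p, resolventMonomial]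

theorem Matrix.det_succ_of_last_row_succ_eq_zero {R : Type*} [CommRing R] {n : ℕ}
    (B : Matrix (Fin (n + 1)) (Fin (n + 1)) R) (h : ∀ k : Fin n, B (Fin.last n) k.succ = 0) :
    B.det = (-1) ^ n * B (Fin.last n) 0 * (B.submatrix Fin.castSucc Fin.succ).det := by
  rw [det_succ_row B (Fin.last n), Fin.sum_univ_succ]
  simp [h, Fin.succAbove_last]

namespace IsMonicOrthogonalSequence

variable {α : Measure ℝ} [SigmaFinite α] {π : ℕ → ℝ[X]}

theorem integral_Vand_sq (hπ : IsMonicOrthogonalSequence α π)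
    (hα : ∀ p : ℝ[X], Integrable (fun t => p.eval t) α) (n : ℕ) :
    ∫ x : Fin n → ℝ, Vand x ^ 2 ∂(Measure.pi fun _ => α) =
      n ! * ∏ j : Fin n, ∫ t, (π j).eval t ^ 2 ∂α := by
  have hV (x : Fin n → ℝ) : Vand x ^ 2 =
      (Matrix.of fun i j : Fin n => (π j).eval (x i)).det *
        (Matrix.of fun i j : Fin n => (π j).eval (x i)).det := by
    rw [Vand_eq_det_eval (p := fun j => π j) (fun j => hπ.natDegree_eq j) (fun j => hπ.monic j),
      sq]
  have hgram :
      (Matrix.of fun j k : Fin n => ∫ t, (π j).eval t * (π k).eval t ∂α).IsUpperTriangular :=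
    fun j k hkj => hπ.orthogonal j k (Fin.val_injective.ne (ne_of_gt hkj))
  simp_rw [hV]
  rw [integral_det_mul_det α (fun (j : Fin n) t => (π j).eval t) (fun j t => (π j).eval t)
      fun j k => by simpa using hα (π j * π k), Fintype.card_fin,
    Matrix.det_of_isUpperTriangular hgram]
  simp_rw [Matrix.of_apply, sq]

theorem integral_inv_prod_sub_mul_Vand_sq (hπ : IsMonicOrthogonalSequence α π)
    (hα : ∀ p : ℝ[X], Integrable (fun t => p.eval t) α) {ε : ℝ}
    (hαε : ∀ p : ℝ[X], Integrable (fun t => p.eval t / (t - ε)) α) (hε : α {ε} = 0) (M : ℕ) :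
    ∫ x : Fin (M + 1) → ℝ, (∏ i, (ε - x i))⁻¹ * Vand x ^ 2 ∂(Measure.pi fun _ => α) =
      -((M + 1)! * (∏ j : Fin M, ∫ t, (π j).eval t ^ 2 ∂α) *
        ∫ t, (π M).eval t / (t - ε) ∂α) := by
  set B := Matrix.of fun (j k : Fin (M + 1)) => ∫ t, (π j).eval t * resolventMonomial ε k t ∂α
  have hint (j k : Fin (M + 1)) :
      Integrable (fun t => (π j).eval t * resolventMonomial ε k t) α := by
    refine Fin.cases ?_ (fun k => ?_) k
    · simpa [resolventMonomial, div_eq_mul_inv] using hαε (π j)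
    · have h := hα (π j * X ^ (k : ℕ))
      simp only [eval_mul, eval_pow, eval_X] at h
      simpa [resolventMonomial] using h
  have hlast (k : Fin M) : B (Fin.last M) k.succ = 0 := by
    simpa [B, resolventMonomial] using hπ.integral_eval_mul_pow_eq_zero hα k.is_lt
  have hminor :
      (B.submatrix Fin.castSucc Fin.succ).det = ∏ j : Fin M, ∫ t, (π j).eval t ^ 2 ∂α := by
    rw [Matrix.det_of_isUpperTriangular fun j k (hkj : k < j) => by
      simpa [B, resolventMonomial] using hπ.integral_eval_mul_pow_eq_zero hα hkj]
    simp [B, resolventMonomial, hπ.integral_eval_mul_pow_self hα]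
  have hpt : ∀ᵐ x : Fin (M + 1) → ℝ ∂(Measure.pi fun _ => α),
      (∏ i, (ε - x i))⁻¹ * Vand x ^ 2 =
      (-1) ^ (M + 1) * ((Matrix.of fun i j : Fin (M + 1) => (π j).eval (x i)).det *
        (Matrix.of fun i k => resolventMonomial ε k (x i)).det) := by
    have hae : ∀ᵐ x : Fin (M + 1) → ℝ ∂(Measure.pi fun _ => α), ∀ i, x i ≠ ε :=
      ae_all_iff.2 fun i => Measure.tendsto_eval_ae_ae.eventually (p := fun t => t ≠ ε)
        (measure_eq_zero_iff_ae_notMem.1 hε)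
    filter_upwards [hae] with x hx
    have hne : ∏ i, (ε - x i) ≠ 0 := prod_ne_zero_iff.2 fun i _ => sub_ne_zero.2 (hx i).symm
    have hneg : ∏ i, (x i - ε) = (-1) ^ (M + 1) * ∏ i, (ε - x i) := by
      simpa using prod_neg (s := univ) fun i => ε - x i
    rw [sq]
    nth_rw 1 [Vand_eq_det_eval (p := fun j => π j) (fun j => hπ.natDegree_eq j)
      fun j => hπ.monic j]
    rw [← prod_sub_mul_det_resolventMonomial ε x hx, hneg]
    field_simp
  have hsign : (-1 : ℝ) ^ (M + 1) * (-1) ^ M = -1 := by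
    rw [← pow_add]
    exact Odd.neg_one_pow ⟨M, by ring⟩
  rw [integral_congr_ae hpt, integral_const_mul, integral_det_mul_det α _ _ hint, Fintype.card_fin,
    Matrix.det_succ_of_last_row_succ_eq_zero B hlast, hminor]
  simp only [B, Matrix.of_apply, resolventMonomial, Fin.cons_zero, Fin.val_last, ← div_eq_mul_inv]
  linear_combination ((M + 1)! * (∫ t, (π M).eval t / (t - ε) ∂α) *
    ∏ j : Fin M, ∫ t, (π j).eval t ^ 2 ∂α) * hsign

end IsMonicOrthogonalSequence

/-- Average of a single inverse characteristic polynomial: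
`⟨ ∏_i (ε - x_i)⁻¹ ⟩ = γ_{N-1} h_{N-1}(ε)` where `γ_{N-1} = -2πi/c_{N-1}²`. -/
theorem average_inverse_char_poly (α : Measure ℝ) [IsFiniteMeasure α] (Q : ℝ)
    (hQ : α (Set.Icc (-Q) Q)ᶜ = 0)
    (hposdef : ∀ p : Polynomial ℝ, p ≠ 0 → 0 < ∫ t, (p.eval t) ^ 2 ∂α)
    (π : ℕ → Polynomial ℝ)
    (hmonic : ∀ j, (π j).Monic) (hdeg : ∀ j, (π j).natDegree = j)
    (horth : ∀ j k, j ≠ k → ∫ t, (π j).eval t * (π k).eval t ∂α = 0)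
    (N : ℕ) (hN : 1 ≤ N) (ε : ℝ) (hεQ : Q < ε)
    (c : ℝ) (hc : c ^ 2 = ∫ t, ((π (N - 1)).eval t) ^ 2 ∂α)
    (Z : ℝ)
    (hZ : Z = ∫ x : Fin N → ℝ, (Vand x) ^ 2 ∂(Measure.pi fun _ => α)) :
    Complex.ofReal
        ((1 / Z) * ∫ x : Fin N → ℝ, (∏ i, (ε - x i))⁻¹ * (Vand x) ^ 2
          ∂(Measure.pi fun _ => α))
      = (-(2 * (Real.pi : ℂ) * Complex.I) / (c : ℂ) ^ 2) *
        ((1 / (2 * (Real.pi : ℂ) * Complex.I)) *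
          ∫ t, Complex.ofReal ((π (N - 1)).eval t) / ((t : ℂ) - (ε : ℂ)) ∂α) := by
  obtain ⟨M, rfl⟩ : ∃ M, N = M + 1 := ⟨N - 1, by omega⟩
  rw [Nat.add_sub_cancel] at hc ⊢
  have hπ : IsMonicOrthogonalSequence α π := ⟨hmonic, hdeg, horth⟩
  have hα (p : ℝ[X]) : Integrable (fun t => p.eval t) α :=
    p.continuous.continuousOn.integrable_of_measure_compl_eq_zero isCompact_Icc hQ
  have hαε (p : ℝ[X]) : Integrable (fun t => p.eval t / (t - ε)) α :=
    (p.continuous.continuousOn.div (by fun_prop) fun t ht => sub_ne_zero.2 (by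
      linarith [ht.2])).integrable_of_measure_compl_eq_zero isCompact_Icc hQ
  have hε : α {ε} = 0 :=
    measure_mono_null (Set.singleton_subset_iff.2
      (show ε ∈ (Set.Icc (-Q) Q)ᶜ from fun h => hεQ.not_ge h.2)) hQ
  have hnorm (j : ℕ) : 0 < ∫ t, (π j).eval t ^ 2 ∂α := hposdef _ (hmonic j).ne_zero
  have hP : (∏ j : Fin M, ∫ t, (π j).eval t ^ 2 ∂α) ≠ 0 :=
    (prod_pos fun (j : Fin M) _ => hnorm j).ne'
  have hc0 : c ≠ 0 := by rintro rfl; linarith [hnorm M]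
  have hres : ∫ t, Complex.ofReal ((π M).eval t) / ((t : ℂ) - ε) ∂α =
      ((∫ t, (π M).eval t / (t - ε) ∂α : ℝ) : ℂ) := by
    simp_rw [← Complex.ofReal_sub, ← Complex.ofReal_div]
    exact integral_ofReal
  rw [hZ, hπ.integral_Vand_sq hα, hπ.integral_inv_prod_sub_mul_Vand_sq hα hαε hε,
    Fin.prod_univ_castSucc, Fin.val_last, ← hc, hres]
  simp only [Fin.val_castSucc]
  generalize (∏ j : Fin M, ∫ t, (π j).eval t ^ 2 ∂α) = P at hP ⊢
  generalize ∫ t, (π M).eval t / (t - ε) ∂α = w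
  rw [show 1 / ((M + 1)! * (P * c ^ 2)) * -((M + 1)! * P * w) = -(w / c ^ 2) by field_simp]
  push_cast
  field_simp
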